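/- arXiv:2203.01836 — 7 statements merged into one kernel-verified Lean document; each statement's English description precedes it below -/
import Mathlib

section
/- Let n ≥ 2, let S ⊆ ℝ^n be a compact set such that σ_S is a finite measure, and let θ : ℝ^n → ℝ be continuous. Let ε ∈ ℝ ∖ {0} and let t ∈ ℝ^n with t ∉ S. Then ∫ G_n(ε·t − y)·θ(y/ε) dσ_{ε·S}(y) = |ε| · ∫ G_n(t − s)·θ(s) dσ_S(s) − δ_{2,n}·(|ε|·log|ε|/(2π)) · ∫ θ(s) dσ_S(s), where δ_{2,n} is the Kronecker delta (so the logarithmic term is present only for n = 2). -/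
open MeasureTheory RealInnerProductSpace Pointwise

/-- The measure `σ_S`: the `(n-1)`-dimensional Hausdorff measure on `ℝⁿ` restricted to `S`. -/
noncomputable def bdryMeasure (n : ℕ) (S : Set (EuclideanSpace ℝ (Fin n))) :
    Measure (EuclideanSpace ℝ (Fin n)) := (μH[(n : ℝ) - 1]).restrict S

/-- `s_n`: the `(n-1)`-dimensional Hausdorff measure of the unit sphere of `ℝⁿ`. -/
noncomputable def sphereArea (n : ℕ) : ℝ :=
  (μH[(n : ℝ) - 1] (Metric.sphere (0 : EuclideanSpace ℝ (Fin n)) 1)).toReal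

/-- The fundamental solution `G_n` of `-Δ` in `ℝⁿ`. -/
noncomputable def fundSol (n : ℕ) (x : EuclideanSpace ℝ (Fin n)) : ℝ :=
  if n = 2 then -(1 / (2 * Real.pi)) * Real.log ‖x‖
  else (1 / (((n : ℝ) - 2) * sphereArea n)) * ‖x‖ ^ ((2 : ℝ) - (n : ℝ))

/-- The partial derivative in the `i`-th coordinate direction. -/
noncomputable def pderiv' {n : ℕ} (i : Fin n) (F : EuclideanSpace ℝ (Fin n) → ℝ) :
    EuclideanSpace ℝ (Fin n) → ℝ :=
  fun x => lineDeriv ℝ F x (EuclideanSpace.single i 1)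

/-- The iterated partial derivative `D^β F` of multi-index `β`. -/
noncomputable def multiDeriv {n : ℕ} (β : Fin n → ℕ) (F : EuclideanSpace ℝ (Fin n) → ℝ) :
    EuclideanSpace ℝ (Fin n) → ℝ :=
  (List.finRange n).foldr (fun i G => (pderiv' i)^[β i] G) F

/-!
Under `y = ε • s` the measure `σ_{ε•S}` is the push-forward of `|ε| ^ (n - 1) • σ_S`, by the
homogeneity of Hausdorff measure. For `n ≠ 2`, `G_n` is homogeneous of degree `2 - n`, so the two
powers of `|ε|` combine to `|ε|`; for `n = 2`, `G_2 (ε • x) = G_2 x - log |ε| / (2π)`, and the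
constant produces the extra term; splitting off that term is legitimate because `t ∉ S` makes
both integrands continuous on the compact `S`.
-/

section HausdorffScaling

variable {E : Type*} [NormedAddCommGroup E] [NormedSpace ℝ E] [MeasurableSpace E] [BorelSpace E]
  {d c : ℝ}

theorem hausdorffMeasure_restrict_smul_set (hd : 0 ≤ d) (hc : c ≠ 0) (S : Set E) :
    (μH[d]).restrict (c • S) = ‖c‖₊ ^ d • ((μH[d]).restrict S).map (c • ·) := by
  have hmap : (μH[d] : Measure E).map (c • ·) = ‖c‖₊⁻¹ ^ d • μH[d] := by
    simpa [AffineMap.coe_homothety] using map_homothety_hausdorffMeasure (P := E) hd 0 hc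
  have hpre : (c • ·) ⁻¹' (c • S) = S := by
    rw [Set.preimage_smul₀ hc, smul_smul, inv_mul_cancel₀ hc, one_smul]
  rw [← hpre, ← (measurableEmbedding_const_smul₀ hc).restrict_map, hmap, Measure.restrict_smul,
    smul_smul, hpre, ← NNReal.mul_rpow, mul_inv_cancel₀ (nnnorm_ne_zero_iff.mpr hc),
    NNReal.one_rpow, one_smul]

theorem integral_hausdorffMeasure_restrict_smul_set (hd : 0 ≤ d) (hc : c ≠ 0) (S : Set E)
    (f : E → ℝ) :
    ∫ y, f y ∂(μH[d]).restrict (c • S) = |c| ^ d * ∫ x, f (c • x) ∂(μH[d]).restrict S := by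
  rw [hausdorffMeasure_restrict_smul_set hd hc, integral_smul_nnreal_measure,
    (measurableEmbedding_const_smul₀ hc).integral_map, NNReal.smul_def, smul_eq_mul,
    NNReal.coe_rpow, coe_nnnorm, Real.norm_eq_abs]

end HausdorffScaling

theorem integral_bdryMeasure_smul_set {n : ℕ} (hn : 1 ≤ n) {c : ℝ} (hc : c ≠ 0)
    (S : Set (EuclideanSpace ℝ (Fin n))) (f : EuclideanSpace ℝ (Fin n) → ℝ) :
    ∫ y, f y ∂bdryMeasure n (c • S) = |c| ^ ((n : ℝ) - 1) * ∫ x, f (c • x) ∂bdryMeasure n S :=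
  integral_hausdorffMeasure_restrict_smul_set (sub_nonneg.mpr (by exact_mod_cast hn)) hc S f

theorem ContinuousOn.integrable_restrict_of_isCompact {X : Type*} [TopologicalSpace X]
    [T2Space X] [MeasurableSpace X] [OpensMeasurableSpace X] {μ : Measure X} {S : Set X}
    {f : X → ℝ} (hf : ContinuousOn f S) (hS : IsCompact S) (hfin : IsFiniteMeasure (μ.restrict S)) :
    Integrable f (μ.restrict S) :=
  hf.integrableOn_of_subset_isCompact hS hS.measurableSet subset_rfl
    (by simpa using measure_ne_top (μ.restrict S) Set.univ)

theorem continuousAt_fundSol (n : ℕ) {x : EuclideanSpace ℝ (Fin n)} (hx : x ≠ 0) :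
    ContinuousAt (fundSol n) x := by
  have hnx : ‖x‖ ≠ 0 := norm_ne_zero_iff.mpr hx
  unfold fundSol
  split_ifs
  · exact ((Real.continuousAt_log hnx).comp continuous_norm.continuousAt).const_mul _
  · exact ((Real.continuousAt_rpow_const _ _ (Or.inl hnx)).comp
      continuous_norm.continuousAt).const_mul _

theorem continuousOn_fundSol_sub (n : ℕ) {S : Set (EuclideanSpace ℝ (Fin n))}
    {t : EuclideanSpace ℝ (Fin n)} (ht : t ∉ S) : ContinuousOn (fun s => fundSol n (t - s)) S :=
  fun _ hs => ((continuousAt_fundSol n (sub_ne_zero.mpr (ne_of_mem_of_not_mem hs ht).symm)).comp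
    (continuous_const.sub continuous_id).continuousAt).continuousWithinAt

theorem fundSol_two_smul {ε : ℝ} (hε : ε ≠ 0) {x : EuclideanSpace ℝ (Fin 2)} (hx : x ≠ 0) :
    fundSol 2 (ε • x) = fundSol 2 x - Real.log |ε| / (2 * Real.pi) := by
  simp only [fundSol, ↓reduceIte, norm_smul, Real.norm_eq_abs]
  rw [Real.log_mul (abs_ne_zero.mpr hε) (norm_ne_zero_iff.mpr hx)]
  ring

theorem fundSol_smul_of_ne_two {n : ℕ} (hn : n ≠ 2) (ε : ℝ) (x : EuclideanSpace ℝ (Fin n)) :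
    fundSol n (ε • x) = |ε| ^ ((2 : ℝ) - n) * fundSol n x := by
  simp only [fundSol, if_neg hn, norm_smul, Real.norm_eq_abs]
  rw [Real.mul_rpow (abs_nonneg ε) (norm_nonneg x)]
  ring

/-- Change of variables in the single layer integral over a scaled compact set, evaluated at a
scaled point: `∫_{ε•S} G_n(ε•t - y) θ(y/ε) dσ_{ε•S}(y) = |ε| ∫_S G_n(t - s) θ(s) dσ_S(s)
- δ_{2,n} (|ε| log |ε| / (2π)) ∫_S θ(s) dσ_S(s)`. -/
theorem stmt4 (n : ℕ) (hn : 2 ≤ n) (S : Set (EuclideanSpace ℝ (Fin n)))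
    (hS : IsCompact S) (hfin : IsFiniteMeasure (bdryMeasure n S))
    (θ : EuclideanSpace ℝ (Fin n) → ℝ) (hθ : Continuous θ)
    (ε : ℝ) (hε : ε ≠ 0) (t : EuclideanSpace ℝ (Fin n)) (ht : t ∉ S) :
    ∫ y, fundSol n (ε • t - y) * θ (ε⁻¹ • y) ∂(bdryMeasure n (ε • S)) =
      |ε| * ∫ s, fundSol n (t - s) * θ s ∂(bdryMeasure n S) -
        (if n = 2 then (1 : ℝ) else 0) * (|ε| * Real.log |ε| / (2 * Real.pi)) *
          ∫ s, θ s ∂(bdryMeasure n S) := by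
  rw [integral_bdryMeasure_smul_set (by omega) hε]
  simp only [← smul_sub, inv_smul_smul₀ hε]
  rcases eq_or_ne n 2 with rfl | h2
  · have hae : ∀ᵐ s ∂bdryMeasure 2 S, fundSol 2 (ε • (t - s)) * θ s =
        fundSol 2 (t - s) * θ s - Real.log |ε| / (2 * Real.pi) * θ s :=
      (ae_restrict_mem hS.measurableSet).mono fun s hs => by
        rw [fundSol_two_smul hε (sub_ne_zero.mpr (ne_of_mem_of_not_mem hs ht).symm)]
        ring
    have hGθ : Integrable (fun s => fundSol 2 (t - s) * θ s) (bdryMeasure 2 S) :=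
      ((continuousOn_fundSol_sub 2 ht).mul hθ.continuousOn).integrable_restrict_of_isCompact hS hfin
    have hθ' : Integrable θ (bdryMeasure 2 S) :=
      hθ.continuousOn.integrable_restrict_of_isCompact hS hfin
    rw [integral_congr_ae hae, integral_sub hGθ (hθ'.const_mul _), integral_const_mul, if_pos rfl]
    norm_num
    ring
  · simp only [fundSol_smul_of_ne_two h2, mul_assoc, integral_const_mul, if_neg h2]
    rw [← mul_assoc, ← Real.rpow_add (abs_pos.mpr hε)]
    norm_num
end

section
/- Let n ≥ 2, let S ⊆ ℝ^n be a compact set such that σ_S is a finite measure, let R = sup_{s∈S}‖s‖, and let θ : ℝ^n → ℝ be continuous. Then for every x ∈ ℝ^n ∖ {0}, the map ε ↦ ∫ G_n(x − ε·s)·θ(s) dσ_S(s) is real analytic on the open interval {ε ∈ ℝ : |ε|·R < ‖x‖}. -/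
open MeasureTheory RealInnerProductSpace Pointwise

open Metric Set Complex

/-! Since `‖x - ε • s‖² = ‖x‖² - 2ε⟪x, s⟫ + ε²‖s‖²`, the integrand is `Φ(Q_s(ε)) θ(s)` with `Q_s` a
quadratic polynomial and `Φ` a multiple of `log` or of a complex power, holomorphic on the slit
plane. If `|ε₀| R < ‖x‖`, then `Q_s(ε₀) = ‖x - ε₀ • s‖² > 0` for every `s ∈ S`, so by compactness of
`S` all `Q_s` map one complex neighbourhood of `ε₀` into the slit plane. There the complexified
integral is holomorphic (differentiate under the integral sign; the derivative is bounded on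
compact sets), and it restricts to the given map on the real axis. -/

section ParametricIntegral

variable {X : Type*} [TopologicalSpace X] [T2Space X] [MeasurableSpace X]
  [OpensMeasurableSpace X] {μ : Measure X} {K : Set X}

theorem hasDerivAt_setIntegral_of_continuousOn {𝕜 : Type*} [RCLike 𝕜] {U : Set 𝕜}
    {F F' : 𝕜 → X → 𝕜} (hK : IsCompact K) [IsFiniteMeasure (μ.restrict K)] (hU : IsOpen U)
    (hF : ContinuousOn (Function.uncurry F) (U ×ˢ K))
    (hF' : ContinuousOn (Function.uncurry F') (U ×ˢ K))
    (hderiv : ∀ z ∈ U, ∀ s ∈ K, HasDerivAt (F · s) (F' z s) z) {z₀ : 𝕜} (hz₀ : z₀ ∈ U) :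
    HasDerivAt (fun z => ∫ s in K, F z s ∂μ) (∫ s in K, F' z₀ s ∂μ) z₀ := by
  have hKm : MeasurableSet K := hK.isClosed.measurableSet
  have hK_ae : ∀ᵐ s ∂μ.restrict K, s ∈ K := ae_restrict_mem hKm
  have slice {G : 𝕜 → X → 𝕜} (hG : ContinuousOn (Function.uncurry G) (U ×ˢ K)) {z : 𝕜}
      (hz : z ∈ U) : ContinuousOn (G z) K :=
    hG.comp (Continuous.prodMk_right z).continuousOn fun s hs => ⟨hz, hs⟩
  obtain ⟨r, hr, hrU⟩ := nhds_basis_closedBall.mem_iff.1 (hU.mem_nhds hz₀)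
  obtain ⟨C, hC⟩ := ((isCompact_closedBall z₀ r).prod hK).exists_bound_of_continuousOn
    (hF'.mono (prod_mono hrU subset_rfl))
  obtain ⟨C₀, hC₀⟩ := hK.exists_bound_of_continuousOn (slice hF hz₀)
  refine (hasDerivAt_integral_of_dominated_loc_of_deriv_le (closedBall_mem_nhds z₀ hr)
    ?_ ?_ ((slice hF' hz₀).aestronglyMeasurable hKm) (bound := fun _ => C) ?_
    (integrable_const C) ?_).2
  · filter_upwards [hU.mem_nhds hz₀] with z hz using (slice hF hz).aestronglyMeasurable hKm
  · exact (integrable_const C₀).mono' ((slice hF hz₀).aestronglyMeasurable hKm)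
      (hK_ae.mono hC₀)
  · filter_upwards [hK_ae] with s hs z hz using hC (z, s) ⟨hz, hs⟩
  · filter_upwards [hK_ae] with s hs z hz using hderiv z (hrU hz) s hs

theorem analyticOnNhd_setIntegral_of_continuousOn {U : Set ℂ} {F F' : ℂ → X → ℂ}
    (hK : IsCompact K) [IsFiniteMeasure (μ.restrict K)] (hU : IsOpen U)
    (hF : ContinuousOn (Function.uncurry F) (U ×ˢ K))
    (hF' : ContinuousOn (Function.uncurry F') (U ×ˢ K))
    (hderiv : ∀ z ∈ U, ∀ s ∈ K, HasDerivAt (F · s) (F' z s) z) :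
    AnalyticOnNhd ℂ (fun z => ∫ s in K, F z s ∂μ) U :=
  DifferentiableOn.analyticOnNhd (fun _ hz =>
    (hasDerivAt_setIntegral_of_continuousOn hK hU hF hF' hderiv hz).differentiableAt
      |>.differentiableWithinAt) hU

end ParametricIntegral

section NormSqSub

variable {E : Type*} [NormedAddCommGroup E] [InnerProductSpace ℝ E]

noncomputable def complexNormSqSub (x s : E) (z : ℂ) : ℂ :=
  (‖x‖ ^ 2 : ℝ) - 2 * (⟪x, s⟫ : ℝ) * z + (‖s‖ ^ 2 : ℝ) * z ^ 2

theorem complexNormSqSub_ofReal (x s : E) (ε : ℝ) :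
    complexNormSqSub x s ε = ((‖x - ε • s‖ ^ 2 : ℝ) : ℂ) := by
  rw [norm_sub_sq_real, real_inner_smul_right, norm_smul, mul_pow, Real.norm_eq_abs, sq_abs,
    complexNormSqSub]
  push_cast
  ring

theorem hasDerivAt_complexNormSqSub (x s : E) (z : ℂ) :
    HasDerivAt (complexNormSqSub x s) (2 * (‖s‖ ^ 2 : ℝ) * z - 2 * (⟪x, s⟫ : ℝ)) z := by
  have h := ((hasDerivAt_id z).const_mul (2 * ((⟪x, s⟫ : ℝ) : ℂ))).const_sub ((‖x‖ ^ 2 : ℝ) : ℂ)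
    |>.add ((hasDerivAt_pow 2 z).const_mul ((‖s‖ ^ 2 : ℝ) : ℂ))
  refine h.congr_deriv ?_
  norm_num
  ring

theorem continuous_complexNormSqSub (x : E) :
    Continuous fun p : ℂ × E => complexNormSqSub x p.2 p.1 := by
  unfold complexNormSqSub
  exact (continuous_const.sub ((continuous_const.mul
    (continuous_ofReal.comp (continuous_const.inner continuous_snd))).mul continuous_fst)).add
    ((continuous_ofReal.comp (continuous_snd.norm.pow 2)).mul (continuous_fst.pow 2))

theorem exists_isOpen_complexNormSqSub_mem_slitPlane {S : Set E} (hS : IsCompact S) {x : E}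
    {ε₀ : ℝ} (hε₀ : ∀ s ∈ S, ‖ε₀ • s‖ < ‖x‖) :
    ∃ U : Set ℂ, IsOpen U ∧ (ε₀ : ℂ) ∈ U ∧
      ∀ z ∈ U, ∀ s ∈ S, complexNormSqSub x s z ∈ slitPlane := by
  have hpos : ∀ s ∈ S, complexNormSqSub x s ε₀ ∈ slitPlane := fun s hs => by
    rw [complexNormSqSub_ofReal, ofReal_mem_slitPlane]
    have hne : x ≠ ε₀ • s := fun h => (hε₀ s hs).ne (by rw [h])
    exact pow_pos (norm_sub_pos_iff.2 hne) 2
  obtain ⟨U, V, hU, -, hε₀U, hSV, hUV⟩ :=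
    generalized_tube_lemma (isCompact_singleton (x := (ε₀ : ℂ))) hS
      (isOpen_slitPlane.preimage (continuous_complexNormSqSub x))
      (by rintro ⟨z, s⟩ ⟨rfl, hs⟩; exact hpos s hs)
  refine ⟨U, hU, hε₀U (mem_singleton _), fun z hz s hs => ?_⟩
  have hzs := hUV (mk_mem_prod hz (hSV hs))
  rwa [mem_preimage] at hzs

end NormSqSub

theorem analyticAt_setIntegral_radialKernel {E : Type*} [NormedAddCommGroup E]
    [InnerProductSpace ℝ E] [MeasurableSpace E] [OpensMeasurableSpace E] {μ : Measure E}
    {S : Set E} (hS : IsCompact S) [IsFiniteMeasure (μ.restrict S)] {Φ : ℂ → ℂ}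
    (hΦ : DifferentiableOn ℂ Φ slitPlane) {g : E → ℝ}
    (hg : ∀ y ≠ 0, Φ (‖y‖ ^ 2 : ℝ) = g y) {θ : E → ℝ} (hθ : Continuous θ) {x : E} {ε₀ : ℝ}
    (hε₀ : ∀ s ∈ S, ‖ε₀ • s‖ < ‖x‖) :
    AnalyticAt ℝ (fun ε : ℝ => ∫ s in S, g (x - ε • s) * θ s ∂μ) ε₀ := by
  obtain ⟨U, hU, hε₀U, hQU⟩ := exists_isOpen_complexNormSqSub_mem_slitPlane hS hε₀
  have hQ_cont := continuous_complexNormSqSub x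
  have hθ_cont : Continuous fun p : ℂ × E => (θ p.2 : ℂ) := by fun_prop
  have hmaps : MapsTo (fun p : ℂ × E => complexNormSqSub x p.2 p.1) (U ×ˢ S) slitPlane :=
    fun p hp => hQU p.1 hp.1 p.2 hp.2
  have hF : AnalyticOnNhd ℂ (fun z => ∫ s in S, Φ (complexNormSqSub x s z) * θ s ∂μ) U := by
    refine analyticOnNhd_setIntegral_of_continuousOn hS hU
      (F' := fun z s => deriv Φ (complexNormSqSub x s z) *
        (2 * (‖s‖ ^ 2 : ℝ) * z - 2 * (⟪x, s⟫ : ℝ)) * θ s) ?_ ?_ ?_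
    · exact (hΦ.continuousOn.comp hQ_cont.continuousOn hmaps).mul hθ_cont.continuousOn
    · have hΦ' := (hΦ.analyticOnNhd isOpen_slitPlane).deriv.continuousOn
      refine ((hΦ'.comp hQ_cont.continuousOn hmaps).mul ?_).mul hθ_cont.continuousOn
      fun_prop
    · intro z hz s hs
      exact ((hΦ.differentiableAt (isOpen_slitPlane.mem_nhds (hQU z hz s hs))).hasDerivAt.comp z
        (hasDerivAt_complexNormSqSub x s z)).mul_const _
  refine (hF ε₀ hε₀U).re_ofReal.congr ?_
  filter_upwards [continuous_ofReal.continuousAt.preimage_mem_nhds (hU.mem_nhds hε₀U)]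
    with ε hε
  have hpt : ∀ s ∈ S, Φ (complexNormSqSub x s ε) * θ s = ((g (x - ε • s) * θ s : ℝ) : ℂ) := by
    intro s hs
    have hpos := hQU ε hε s hs
    rw [complexNormSqSub_ofReal] at hpos ⊢
    rw [hg _ (norm_ne_zero_iff.1 (sq_pos_iff.1 (ofReal_mem_slitPlane.1 hpos)))]
    push_cast
    rfl
  rw [setIntegral_congr_fun hS.isClosed.measurableSet hpt, integral_complex_ofReal, ofReal_re]

noncomputable def fundSolOfNormSq (n : ℕ) (w : ℂ) : ℂ :=
  if n = 2 then -(1 / (4 * Real.pi) : ℝ) * Complex.log w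
  else (1 / (((n : ℝ) - 2) * sphereArea n) : ℝ) * w ^ ((((2 : ℝ) - n) / 2 : ℝ) : ℂ)

theorem differentiableOn_fundSolOfNormSq (n : ℕ) :
    DifferentiableOn ℂ (fundSolOfNormSq n) slitPlane := by
  unfold fundSolOfNormSq
  split_ifs
  · exact fun w hw => ((differentiableAt_log hw).const_mul _).differentiableWithinAt
  · exact fun w hw => ((differentiableAt_id.cpow_const hw).const_mul _).differentiableWithinAt

theorem fundSolOfNormSq_ofReal_norm_sq {n : ℕ} {y : EuclideanSpace ℝ (Fin n)} (hy : y ≠ 0) :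
    fundSolOfNormSq n (‖y‖ ^ 2 : ℝ) = fundSol n y := by
  have hy' : 0 < ‖y‖ := norm_pos_iff.2 hy
  unfold fundSolOfNormSq fundSol
  split_ifs
  · rw [← ofReal_log (by positivity), Real.log_pow]
    push_cast
    ring
  · rw [← ofReal_cpow (by positivity), ← Real.rpow_natCast, ← Real.rpow_mul hy'.le]
    push_cast
    ring_nf

theorem stmt7_general (n : ℕ) (S : Set (EuclideanSpace ℝ (Fin n)))
    (hS : IsCompact S) (hfin : IsFiniteMeasure (bdryMeasure n S))
    (θ : EuclideanSpace ℝ (Fin n) → ℝ) (hθ : Continuous θ)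
    (x : EuclideanSpace ℝ (Fin n)) :
    AnalyticOnNhd ℝ (fun ε : ℝ => ∫ s, fundSol n (x - ε • s) * θ s ∂(bdryMeasure n S))
      {ε : ℝ | |ε| * sSup ((fun s => ‖s‖) '' S) < ‖x‖} := by
  have : IsFiniteMeasure (μH[(n : ℝ) - 1].restrict S) := hfin
  intro ε₀ hε₀
  have hε₀S : ∀ s ∈ S, ‖ε₀ • s‖ < ‖x‖ := fun s hs => by
    rw [norm_smul, Real.norm_eq_abs]
    refine lt_of_le_of_lt (mul_le_mul_of_nonneg_left ?_ (abs_nonneg ε₀)) hε₀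
    exact le_csSup (hS.image continuous_norm).bddAbove (mem_image_of_mem _ hs)
  exact analyticAt_setIntegral_radialKernel hS (differentiableOn_fundSolOfNormSq n)
    (fun _ => fundSolOfNormSq_ofReal_norm_sq) hθ hε₀S

/-- For a compact set `S` with finite surface measure and `x ≠ 0`, the map
`ε ↦ ∫_S G_n(x - ε•s) θ(s) dσ_S(s)` is real analytic on `{ε : |ε| · sup_{s∈S} ‖s‖ < ‖x‖}`. -/
theorem stmt7 (n : ℕ) (hn : 2 ≤ n) (S : Set (EuclideanSpace ℝ (Fin n)))
    (hS : IsCompact S) (hfin : IsFiniteMeasure (bdryMeasure n S))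
    (θ : EuclideanSpace ℝ (Fin n) → ℝ) (hθ : Continuous θ)
    (x : EuclideanSpace ℝ (Fin n)) (hx : x ≠ 0) :
    AnalyticOnNhd ℝ (fun ε : ℝ => ∫ s, fundSol n (x - ε • s) * θ s ∂(bdryMeasure n S))
      {ε : ℝ | |ε| * sSup ((fun s => ‖s‖) '' S) < ‖x‖} :=
  stmt7_general n S hS hfin θ hθ x
end

section
/- Let n ≥ 2, let S ⊆ ℝ^n be a compact set with 0 ∉ S such that σ_S is a finite measure, and let θ : ℝ^n → ℝ be continuous. Then for every t ∈ ℝ^n, the map ε ↦ ∫ G_n(ε·t − y)·θ(y) dσ_S(y) is real analytic on the open interval {ε ∈ ℝ : |ε|·‖t‖ < dist(0, S)}. -/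
open MeasureTheory RealInnerProductSpace Pointwise

/-!
Write `G_n(x) = Φ_n(‖x‖²)` with `Φ_2(w) = -(1/4π) log w` and `Φ_n(w) = c_n w^((2-n)/2)` otherwise,
both holomorphic on the right half-plane. For real `ε`, `‖ε t - y‖²` is the value of the complex
quadratic `Q(z, y) = ‖t‖² z² - 2⟪t, y⟫ z + ‖y‖²`, whose real part `‖(Re z) t - y‖² - ‖t‖² (Im z)²`
stays positive for `y ∈ S` as long as `(|Re z| + |Im z|) ‖t‖ < dist(0, S)`. Near a real `ε₀` of the
interval, `z ↦ ∫ Φ_n(Q(z, y)) θ(y) dσ_S(y)` is thus an integral of holomorphic functions that are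
uniformly bounded by compactness of `S`; Cauchy's estimate bounds their derivatives uniformly as
well, so differentiation under the integral sign shows that it is holomorphic. Its restriction to
the real axis is the given map.
-/

open Metric Filter Topology

section ParametricIntegral

variable {α E : Type*} [MeasurableSpace α] {μ : Measure α} [NormedAddCommGroup E] [NormedSpace ℂ E]
  {F : ℂ → α → E} {z₀ : ℂ} {R M : ℝ}

theorem aestronglyMeasurable_deriv_of_forall_mem_ball (hR : 0 < R)
    (hF_meas : ∀ z ∈ ball z₀ R, AEStronglyMeasurable (F z) μ)
    (hF_diff : ∀ᵐ y ∂μ, DifferentiableAt ℂ (F · y) z₀) :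
    AEStronglyMeasurable (fun y ↦ deriv (F · y) z₀) μ := by
  set u : ℕ → ℂ := fun k ↦ z₀ + ((R / 2 * (1 / ((k : ℝ) + 1)) : ℝ) : ℂ)
  have hu_mem : ∀ k, u k ∈ ball z₀ R := fun k ↦ by
    have : R / 2 * (1 / ((k : ℝ) + 1)) ≤ R / 2 :=
      mul_le_of_le_one_right (by positivity) (div_le_one_of_le₀ (by simp) (by positivity))
    simp only [u, mem_ball, dist_self_add_left, Complex.norm_real, Real.norm_eq_abs]
    rw [abs_of_nonneg (by positivity)]
    linarith
  have hu_lim : Tendsto u atTop (𝓝[≠] z₀) := by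
    refine tendsto_nhdsWithin_iff.2 ⟨?_, .of_forall fun k ↦ ?_⟩
    · have := ((tendsto_one_div_add_atTop_nhds_zero_nat.const_mul (R / 2)).ofReal).const_add z₀
      simpa [u] using this
    · simp [u, hR.ne', Nat.cast_add_one_ne_zero]
  refine aestronglyMeasurable_of_tendsto_ae atTop (f := fun k y ↦ slope (F · y) z₀ (u k))
    (fun k ↦ ?_) ?_
  · simp only [slope_def_module]
    exact ((hF_meas _ (hu_mem k)).sub (hF_meas z₀ (mem_ball_self hR))).const_smul _
  · filter_upwards [hF_diff] with y hy using hy.hasDerivAt.tendsto_slope.comp hu_lim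

theorem differentiableAt_integral_of_forall_norm_le [IsFiniteMeasure μ] (hR : 0 < R)
    (hF_meas : ∀ z ∈ ball z₀ R, AEStronglyMeasurable (F z) μ)
    (hF_diff : ∀ᵐ y ∂μ, DifferentiableOn ℂ (F · y) (ball z₀ R))
    (hF_le : ∀ᵐ y ∂μ, ∀ z ∈ ball z₀ R, ‖F z y‖ ≤ M) :
    DifferentiableAt ℂ (fun z ↦ ∫ y, F z y ∂μ) z₀ := by
  have hF_diffAt : ∀ᵐ y ∂μ, ∀ z ∈ ball z₀ R, HasDerivAt (F · y) (deriv (F · y) z) z := by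
    filter_upwards [hF_diff] with y hy z hz
    exact (hy.differentiableAt (isOpen_ball.mem_nhds hz)).hasDerivAt
  -- Cauchy's estimate on discs of radius `R / 2`, which stay inside `ball z₀ R`.
  have hderiv_le : ∀ᵐ y ∂μ, ∀ z ∈ ball z₀ (R / 2), ‖deriv (F · y) z‖ ≤ M / (R / 2) := by
    filter_upwards [hF_diff, hF_le] with y hdiff hle z hz
    have hsub : closedBall z (R / 2) ⊆ ball z₀ R :=
      closedBall_subset_ball' (by linarith [mem_ball.1 hz])
    exact Complex.norm_deriv_le_of_forall_mem_sphere_norm_le (half_pos hR)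
      (hdiff.diffContOnCl_ball hsub) fun w hw ↦ hle w (hsub (sphere_subset_closedBall hw))
  have hF_int : Integrable (F z₀) μ :=
    (integrable_const M).mono' (hF_meas z₀ (mem_ball_self hR))
      (hF_le.mono fun y hy ↦ hy z₀ (mem_ball_self hR))
  have hF'_meas : AEStronglyMeasurable (fun y ↦ deriv (F · y) z₀) μ :=
    aestronglyMeasurable_deriv_of_forall_mem_ball hR hF_meas
      (hF_diffAt.mono fun y hy ↦ (hy z₀ (mem_ball_self hR)).differentiableAt)
  exact (hasDerivAt_integral_of_dominated_loc_of_deriv_le (ball_mem_nhds z₀ (half_pos hR))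
    (eventually_of_mem (ball_mem_nhds z₀ hR) hF_meas) hF_int hF'_meas hderiv_le
    (integrable_const _)
    (hF_diffAt.mono fun y hy z hz ↦ hy z (ball_subset_ball (by linarith) hz))).2.differentiableAt

theorem analyticOnNhd_integral_of_forall_norm_le [CompleteSpace E] [IsFiniteMeasure μ]
    (hF_meas : ∀ z ∈ ball z₀ R, AEStronglyMeasurable (F z) μ)
    (hF_diff : ∀ᵐ y ∂μ, DifferentiableOn ℂ (F · y) (ball z₀ R))
    (hF_le : ∀ᵐ y ∂μ, ∀ z ∈ ball z₀ R, ‖F z y‖ ≤ M) :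
    AnalyticOnNhd ℂ (fun z ↦ ∫ y, F z y ∂μ) (ball z₀ R) := by
  refine DifferentiableOn.analyticOnNhd (fun z hz ↦ ?_) isOpen_ball
  have hsub : ball z (R - dist z z₀) ⊆ ball z₀ R := ball_subset_ball' (by linarith)
  exact (differentiableAt_integral_of_forall_norm_le (sub_pos.2 hz)
    (fun w hw ↦ hF_meas w (hsub hw)) (hF_diff.mono fun y hy ↦ hy.mono hsub)
    (hF_le.mono fun y hy w hw ↦ hy w (hsub hw))).differentiableWithinAt

theorem analyticAt_integral_of_continuousOn [TopologicalSpace α] [T2Space α]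
    [OpensMeasurableSpace α] [CompleteSpace E] [IsFiniteMeasure μ] {K : Set α} (hK : IsCompact K)
    (hμK : ∀ᵐ y ∂μ, y ∈ K) (hR : 0 < R)
    (hF_cont : ContinuousOn (Function.uncurry F) (closedBall z₀ R ×ˢ K))
    (hF_diff : ∀ y ∈ K, DifferentiableOn ℂ (F · y) (ball z₀ R)) :
    AnalyticAt ℂ (fun z ↦ ∫ y, F z y ∂μ) z₀ := by
  obtain ⟨M, hM⟩ := ((isCompact_closedBall z₀ R).prod hK).exists_bound_of_continuousOn hF_cont
  have hF_meas : ∀ z ∈ ball z₀ R, AEStronglyMeasurable (F z) μ := fun z hz ↦ by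
    rw [← Measure.restrict_eq_self_of_ae_mem hμK]
    exact (hF_cont.comp (Continuous.prodMk_right z).continuousOn
      fun y hy ↦ ⟨ball_subset_closedBall hz, hy⟩).aestronglyMeasurable_of_isCompact hK
      hK.measurableSet
  exact analyticOnNhd_integral_of_forall_norm_le hF_meas (hμK.mono hF_diff)
    (hμK.mono fun y hy z hz ↦ hM (z, y) ⟨ball_subset_closedBall hz, hy⟩) z₀ (mem_ball_self hR)

end ParametricIntegral

section ComplexSqDist

variable {E : Type*} [NormedAddCommGroup E] [InnerProductSpace ℝ E]

noncomputable def complexSqDist (t y : E) (z : ℂ) : ℂ :=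
  ((‖t‖ ^ 2 : ℝ) : ℂ) * z ^ 2 - 2 * ((⟪t, y⟫ : ℝ) : ℂ) * z + ((‖y‖ ^ 2 : ℝ) : ℂ)

theorem norm_smul_sub_sq (t y : E) (x : ℝ) :
    ‖x • t - y‖ ^ 2 = ‖t‖ ^ 2 * x ^ 2 - 2 * ⟪t, y⟫ * x + ‖y‖ ^ 2 := by
  rw [norm_sub_sq_real, norm_smul, real_inner_smul_left, Real.norm_eq_abs, mul_pow, sq_abs]
  ring

theorem complexSqDist_ofReal (t y : E) (x : ℝ) :
    complexSqDist t y x = ((‖x • t - y‖ ^ 2 : ℝ) : ℂ) := by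
  rw [norm_smul_sub_sq, complexSqDist]
  push_cast
  ring

theorem re_complexSqDist (t y : E) (z : ℂ) :
    (complexSqDist t y z).re = ‖z.re • t - y‖ ^ 2 - ‖t‖ ^ 2 * z.im ^ 2 := by
  rw [norm_smul_sub_sq]
  simp only [complexSqDist, pow_two, Complex.ofReal_mul, Complex.add_re, Complex.sub_re,
    Complex.mul_re, Complex.ofReal_re, Complex.ofReal_im, mul_zero, sub_zero, Complex.mul_im,
    zero_mul, add_zero, Complex.re_ofNat, Complex.im_ofNat]
  ring

theorem re_complexSqDist_pos {t y : E} {z : ℂ} (h : (|z.re| + |z.im|) * ‖t‖ < ‖y‖) :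
    0 < (complexSqDist t y z).re := by
  have hlow : ‖y‖ - |z.re| * ‖t‖ ≤ ‖z.re • t - y‖ := by
    simpa [norm_sub_rev, norm_smul] using norm_sub_norm_le y (z.re • t)
  have him : ‖t‖ * |z.im| < ‖z.re • t - y‖ := by linarith
  rw [re_complexSqDist, sub_pos, ← sq_abs z.im, ← mul_pow]
  exact pow_lt_pow_left₀ him (by positivity) two_ne_zero

theorem continuous_complexSqDist (t : E) :
    Continuous fun p : ℂ × E ↦ complexSqDist t p.2 p.1 := by
  unfold complexSqDist
  fun_prop

theorem differentiable_complexSqDist (t y : E) : Differentiable ℂ (complexSqDist t y) := by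
  unfold complexSqDist
  fun_prop

theorem analyticAt_integral_comp_complexSqDist [MeasurableSpace E] [OpensMeasurableSpace E]
    {μ : Measure E}
    [IsFiniteMeasure μ] {S : Set E} (hS : IsCompact S) (hμS : ∀ᵐ y ∂μ, y ∈ S) {Φ : ℂ → ℂ}
    (hΦ : DifferentiableOn ℂ Φ {w | 0 < w.re}) {θ : E → ℝ} (hθ : ContinuousOn θ S) (t : E)
    {z₀ : ℂ} {R : ℝ} (hR : 0 < R)
    (hpos : ∀ z ∈ closedBall z₀ R, ∀ y ∈ S, 0 < (complexSqDist t y z).re) :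
    AnalyticAt ℂ (fun z ↦ ∫ y, Φ (complexSqDist t y z) * θ y ∂μ) z₀ := by
  have hΦ_at : ∀ z ∈ closedBall z₀ R, ∀ y ∈ S, DifferentiableAt ℂ Φ (complexSqDist t y z) :=
    fun z hz y hy ↦ hΦ.differentiableAt
      ((isOpen_lt continuous_const Complex.continuous_re).mem_nhds (hpos z hz y hy))
  refine analyticAt_integral_of_continuousOn hS hμS hR ?_ fun y hy z hz ↦ ?_
  · refine ContinuousOn.mul (fun p hp ↦ ?_) ?_
    · exact ((hΦ_at p.1 hp.1 p.2 hp.2).continuousAt.comp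
        (f := fun p : ℂ × E ↦ complexSqDist t p.2 p.1)
        (continuous_complexSqDist t).continuousAt).continuousWithinAt
    · exact Complex.continuous_ofReal.comp_continuousOn (hθ.comp continuous_snd.continuousOn
        fun p hp ↦ hp.2)
  · exact (((hΦ_at z (ball_subset_closedBall hz) y hy).comp z
      (differentiable_complexSqDist t y z)).mul_const _).differentiableWithinAt

end ComplexSqDist

noncomputable def fundSolProfile (n : ℕ) (w : ℂ) : ℂ :=
  if n = 2 then -(1 / (4 * Real.pi)) * Complex.log w
  else ((1 / (((n : ℝ) - 2) * sphereArea n) : ℝ) : ℂ) * w ^ ((((2 : ℝ) - n) / 2 : ℝ) : ℂ)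

theorem differentiableOn_fundSolProfile (n : ℕ) :
    DifferentiableOn ℂ (fundSolProfile n) {w | 0 < w.re} := fun w hw ↦ by
  have hw : w ∈ Complex.slitPlane := Complex.mem_slitPlane_iff.2 (Or.inl hw)
  unfold fundSolProfile
  split_ifs
  · exact ((Complex.differentiableAt_log hw).const_mul _).differentiableWithinAt
  · exact (((hasDerivAt_id w).cpow_const hw).differentiableAt.const_mul _).differentiableWithinAt

theorem fundSolProfile_ofReal_norm_sq (n : ℕ) (x : EuclideanSpace ℝ (Fin n)) :
    fundSolProfile n ((‖x‖ ^ 2 : ℝ) : ℂ) = fundSol n x := by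
  unfold fundSolProfile fundSol
  split_ifs
  · rw [← Complex.ofReal_log (by positivity), Real.log_pow]
    push_cast
    field_simp
    ring
  · rw [← Complex.ofReal_cpow (by positivity), ← Complex.ofReal_mul, ← Real.rpow_natCast,
      ← Real.rpow_mul (norm_nonneg x)]
    congr 3
    ring

theorem stmt8_general (n : ℕ) (S : Set (EuclideanSpace ℝ (Fin n)))
    (hS : IsCompact S)
    (hfin : IsFiniteMeasure (bdryMeasure n S))
    (θ : EuclideanSpace ℝ (Fin n) → ℝ) (hθ : Continuous θ)
    (t : EuclideanSpace ℝ (Fin n)) :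
    AnalyticOnNhd ℝ (fun ε : ℝ => ∫ y, fundSol n (ε • t - y) * θ y ∂(bdryMeasure n S))
      {ε : ℝ | |ε| * ‖t‖ < Metric.infDist (0 : EuclideanSpace ℝ (Fin n)) S} := by
  intro ε₀ hε₀
  obtain ⟨R, hR, hRS⟩ : ∃ R > 0, closedBall (ε₀ : ℂ) R ⊆
      {z : ℂ | (|z.re| + |z.im|) * ‖t‖ < infDist (0 : EuclideanSpace ℝ (Fin n)) S} :=
    nhds_basis_closedBall.mem_iff.1 <| (isOpen_lt (by fun_prop) continuous_const).mem_nhds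
      (by simpa using hε₀)
  have hpos : ∀ z ∈ closedBall (ε₀ : ℂ) R, ∀ y ∈ S, 0 < (complexSqDist t y z).re :=
    fun z hz y hy ↦ re_complexSqDist_pos <|
      (hRS hz).trans_le (by simpa using infDist_le_dist_of_mem (x := 0) hy)
  have hF := analyticAt_integral_comp_complexSqDist (μ := bdryMeasure n S) hS
    (ae_restrict_mem hS.measurableSet) (differentiableOn_fundSolProfile n) hθ.continuousOn t hR hpos
  convert hF.re_ofReal using 2 with ε
  simp_rw [complexSqDist_ofReal, fundSolProfile_ofReal_norm_sq, ← Complex.ofReal_mul,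
    integral_complex_ofReal, Complex.ofReal_re]

/-- For a compact set `S` with `0 ∉ S` and finite surface measure, the map
`ε ↦ ∫_S G_n(ε•t - y) θ(y) dσ_S(y)` is real analytic on `{ε : |ε| · ‖t‖ < dist(0, S)}`. -/
theorem stmt8 (n : ℕ) (hn : 2 ≤ n) (S : Set (EuclideanSpace ℝ (Fin n)))
    (hS : IsCompact S) (h0 : (0 : EuclideanSpace ℝ (Fin n)) ∉ S)
    (hfin : IsFiniteMeasure (bdryMeasure n S))
    (θ : EuclideanSpace ℝ (Fin n) → ℝ) (hθ : Continuous θ)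
    (t : EuclideanSpace ℝ (Fin n)) :
    AnalyticOnNhd ℝ (fun ε : ℝ => ∫ y, fundSol n (ε • t - y) * θ y ∂(bdryMeasure n S))
      {ε : ℝ | |ε| * ‖t‖ < Metric.infDist (0 : EuclideanSpace ℝ (Fin n)) S} :=
  stmt8_general n S hS hfin θ hθ t
end

section
/- Let n ≥ 2, let Ω^i be a bounded open subset of ℝ^n, let S = ∂Ω^i, and assume σ_S is a finite measure. Let ν : ℝ^n → ℝ^n and θ : ℝ^n → ℝ be continuous, let v ∈ ℝ^n be a fixed vector, let x₀ ∈ ℝ^n ∖ {0}, and let k ∈ ℕ. For ε with |ε|·sup_{s∈S}‖s‖ < ‖x₀‖, define F(ε) = −v · ∇_x [ x ↦ ∫ ν(s)·∇G_n(x − ε·s)·θ(s) dσ_S(s) ](x₀), the negative of the directional derivative along v, at the point x₀, of the inner integral as a function of x. Then the k-th derivative of F at ε = 0 equals (−1)^{k+1} · Σ_{β ∈ ℕ^n, |β| = k} (k!/β!) · v · ∇_x [ x ↦ (∇D^β G_n)(x) · c_β ](x₀), where c_β = ∫ ν(s)·s^β·θ(s) dσ_S(s) is an ℝ^n-valued Bochner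 integral and · denotes the Euclidean inner product. -/
open MeasureTheory RealInnerProductSpace Pointwise

/-!
Away from the origin `G_n` is smooth, so it may be replaced by a globally smooth function that
agrees with it outside a small ball around `0`; near `ε = 0` and `x = x₀` this changes neither
side. For a smooth `f`, differentiating under the integral over the compact set `∂Ωⁱ` gives
`d/dε ∫ c(s) f(x₀ - ε s) = -∑ⱼ ∫ c(s) sⱼ ∂ⱼf(x₀ - ε s)`. The integrand on the left is
`∑ᵢ θ νᵢ ∂ᵢ∂_v G(x₀ - ε s)`, and iterating this rule `k` times, then collecting equal
multi-indices, produces the multinomial weights `k!/β!` through `(k+1)!/γ! = ∑ⱼ γⱼ k!/γ!`.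
At `ε = 0` the moments `∫ νᵢ s^β θ` factor out of the integrals.
-/

open Filter Topology Set Function
open scoped ContDiff

section ParametricIntegral

variable {α : Type*} [TopologicalSpace α] [T2Space α] [MeasurableSpace α] [OpensMeasurableSpace α]
  {μ : Measure α} [IsFiniteMeasure μ] {K : Set α}

theorem Continuous.integrable_of_ae_mem_compact {G : Type*} [NormedAddCommGroup G] {g : α → G}
    (hg : Continuous g) (hK : IsCompact K) (hμK : ∀ᵐ s ∂μ, s ∈ K) : Integrable g μ := by
  rw [← Measure.restrict_eq_self_of_ae_mem hμK]
  exact hg.continuousOn.integrableOn_compact hK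

theorem hasDerivAt_integral_of_continuous_of_ae_mem_compact {F F' : α → ℝ → ℝ}
    (hF : Continuous (uncurry F)) (hF' : Continuous (uncurry F'))
    (hderiv : ∀ s t, HasDerivAt (F s) (F' s t) t) (hK : IsCompact K) (hμK : ∀ᵐ s ∂μ, s ∈ K)
    (t₀ : ℝ) : HasDerivAt (fun t => ∫ s, F s t ∂μ) (∫ s, F' s t₀ ∂μ) t₀ := by
  have hcont : ∀ {G : α → ℝ → ℝ}, Continuous (uncurry G) → ∀ t, Continuous (G · t) :=
    fun hG t => hG.comp (continuous_id.prodMk continuous_const)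
  obtain ⟨C, hC⟩ := (hK.prod (isCompact_closedBall t₀ 1)).exists_bound_of_continuousOn
    hF'.continuousOn
  refine (hasDerivAt_integral_of_dominated_loc_of_deriv_le (bound := fun _ => C)
    (Metric.closedBall_mem_nhds t₀ one_pos)
    (Eventually.of_forall fun t => (hcont hF t).aestronglyMeasurable)
    ((hcont hF t₀).integrable_of_ae_mem_compact hK hμK) (hcont hF' t₀).aestronglyMeasurable
    ?_ (integrable_const C) (ae_of_all _ fun s t _ => hderiv s t)).2
  filter_upwards [hμK] with s hs t ht using hC (s, t) ⟨hs, ht⟩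

end ParametricIntegral

section DirDeriv

variable {E F : Type*} [NormedAddCommGroup E] [NormedSpace ℝ E] [NormedAddCommGroup F]
  [NormedSpace ℝ F] {f g : E → F}

noncomputable def dirDeriv (w : E) (f : E → F) : E → F := fun x => lineDeriv ℝ f x w

theorem Differentiable.dirDeriv_eq (hf : Differentiable ℝ f) (w : E) :
    dirDeriv w f = fun x => fderiv ℝ f x w :=
  funext fun x => (hf x).lineDeriv_eq_fderiv

theorem ContDiff.contDiff_dirDeriv (hf : ContDiff ℝ ∞ f) (w : E) : ContDiff ℝ ∞ (dirDeriv w f) := by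
  rw [(hf.differentiable (by simp)).dirDeriv_eq]
  exact (hf.fderiv_right (m := ∞) (by simp)).clm_apply contDiff_const

theorem ContDiff.dirDeriv_dirDeriv_eq_fderiv_fderiv (hf : ContDiff ℝ ∞ f) (u w x : E) :
    dirDeriv u (dirDeriv w f) x = fderiv ℝ (fderiv ℝ f) x u w := by
  have hf' : Differentiable ℝ (fderiv ℝ f) :=
    (hf.fderiv_right (m := ∞) (by simp)).differentiable (by simp)
  rw [((hf.contDiff_dirDeriv w).differentiable (by simp)).dirDeriv_eq,
    (hf.differentiable (by simp)).dirDeriv_eq]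
  simp [fderiv_clm_apply (hf' x) (differentiableAt_const w)]

theorem ContDiff.dirDeriv_comm (hf : ContDiff ℝ ∞ f) (u w : E) :
    dirDeriv u (dirDeriv w f) = dirDeriv w (dirDeriv u f) := by
  ext x
  simp only [hf.dirDeriv_dirDeriv_eq_fderiv_fderiv]
  exact hf.contDiffAt.isSymmSndFDerivAt (by simp; decide) u w

theorem ContDiff.contDiff_iterate_dirDeriv (hf : ContDiff ℝ ∞ f) (w : E) (m : ℕ) :
    ContDiff ℝ ∞ ((dirDeriv w)^[m] f) := by
  induction m generalizing f with
  | zero => exact hf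
  | succ m ih => exact ih (hf.contDiff_dirDeriv w)

theorem ContDiff.dirDeriv_iterate_dirDeriv (hf : ContDiff ℝ ∞ f) (u w : E) (m : ℕ) :
    dirDeriv u ((dirDeriv w)^[m] f) = (dirDeriv w)^[m] (dirDeriv u f) := by
  induction m generalizing f with
  | zero => rfl
  | succ m ih =>
    rw [iterate_succ_apply, iterate_succ_apply, ih (hf.contDiff_dirDeriv w), hf.dirDeriv_comm]

theorem Set.EqOn.eqOn_dirDeriv {W : Set E} (h : EqOn f g W) (hW : IsOpen W) (w : E) :
    EqOn (dirDeriv w f) (dirDeriv w g) W := fun _ hx =>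
  (h.eventuallyEq_of_mem (hW.mem_nhds hx)).lineDeriv_eq

theorem Set.EqOn.eqOn_iterate_dirDeriv {W : Set E} (h : EqOn f g W) (hW : IsOpen W) (w : E)
    (m : ℕ) :
    EqOn ((dirDeriv w)^[m] f) ((dirDeriv w)^[m] g) W := by
  induction m with
  | zero => exact h
  | succ m ih => simpa only [iterate_succ_apply'] using ih.eqOn_dirDeriv hW w

end DirDeriv

section MultiDeriv

variable {n : ℕ} {f g : EuclideanSpace ℝ (Fin n) → ℝ}

theorem pderiv'_eq_dirDeriv (i : Fin n) :
    pderiv' i = dirDeriv (EuclideanSpace.single i (1 : ℝ)) := rfl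

theorem ContDiff.contDiff_foldr_pderiv' (hf : ContDiff ℝ ∞ f) (β : Fin n → ℕ) (l : List (Fin n)) :
    ContDiff ℝ ∞ (l.foldr (fun i G => (pderiv' i)^[β i] G) f) := by
  induction l with
  | nil => exact hf
  | cons i l ih => exact ih.contDiff_iterate_dirDeriv _ _

theorem ContDiff.dirDeriv_foldr_pderiv' (hf : ContDiff ℝ ∞ f) (u : EuclideanSpace ℝ (Fin n))
    (β : Fin n → ℕ) (l : List (Fin n)) :
    dirDeriv u (l.foldr (fun i G => (pderiv' i)^[β i] G) f) =
      l.foldr (fun i G => (pderiv' i)^[β i] G) (dirDeriv u f) := by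
  induction l with
  | nil => rfl
  | cons i l ih =>
    rw [List.foldr_cons, List.foldr_cons, ← ih]
    exact (hf.contDiff_foldr_pderiv' β l).dirDeriv_iterate_dirDeriv u _ (β i)

theorem ContDiff.foldr_pderiv'_add_single (hf : ContDiff ℝ ∞ f) (β : Fin n → ℕ) {j : Fin n}
    {l : List (Fin n)} (hj : j ∈ l) (hl : l.Nodup) :
    l.foldr (fun i G => (pderiv' i)^[(β + Pi.single j 1 : Fin n → ℕ) i] G) f =
      l.foldr (fun i G => (pderiv' i)^[β i] G) (pderiv' j f) := by
  induction l with
  | nil => cases hj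
  | cons i l ih =>
    obtain ⟨hil, hl⟩ := List.nodup_cons.1 hl
    simp only [List.foldr_cons]
    rcases eq_or_ne i j with rfl | hij
    · have hβ : l.foldr (fun i' G => (pderiv' i')^[(β + Pi.single i 1 : Fin n → ℕ) i'] G) f =
          l.foldr (fun i' G => (pderiv' i')^[β i'] G) f :=
        List.foldr_ext _ _ _ fun i' hi' _ => by
          rw [Pi.add_apply, Pi.single_eq_of_ne (ne_of_mem_of_not_mem hi' hil), add_zero]
      rw [hβ, Pi.add_apply, Pi.single_eq_same, iterate_succ_apply, pderiv'_eq_dirDeriv,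
        hf.dirDeriv_foldr_pderiv' _ β l]
    · rw [Pi.add_apply, Pi.single_eq_of_ne hij, add_zero,
        ih ((List.mem_cons.1 hj).resolve_left hij.symm) hl]

theorem ContDiff.contDiff_multiDeriv (hf : ContDiff ℝ ∞ f) (β : Fin n → ℕ) :
    ContDiff ℝ ∞ (multiDeriv β f) :=
  hf.contDiff_foldr_pderiv' β _

theorem ContDiff.dirDeriv_multiDeriv (hf : ContDiff ℝ ∞ f) (u : EuclideanSpace ℝ (Fin n))
    (β : Fin n → ℕ) : dirDeriv u (multiDeriv β f) = multiDeriv β (dirDeriv u f) :=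
  hf.dirDeriv_foldr_pderiv' u β _

theorem ContDiff.pderiv'_multiDeriv (hf : ContDiff ℝ ∞ f) (j : Fin n) (β : Fin n → ℕ) :
    pderiv' j (multiDeriv β f) = multiDeriv (β + Pi.single j 1) f := by
  rw [multiDeriv, multiDeriv,
    hf.foldr_pderiv'_add_single β (List.mem_finRange j) (List.nodup_finRange n)]
  exact hf.dirDeriv_foldr_pderiv' _ β _

theorem Set.EqOn.eqOn_multiDeriv {W : Set (EuclideanSpace ℝ (Fin n))} (h : EqOn f g W)
    (hW : IsOpen W) (β : Fin n → ℕ) : EqOn (multiDeriv β f) (multiDeriv β g) W := by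
  unfold multiDeriv
  induction List.finRange n with
  | nil => exact h
  | cons i l ih => exact ih.eqOn_iterate_dirDeriv hW _ _

theorem DifferentiableAt.lineDeriv_eq_sum_pderiv' {x : EuclideanSpace ℝ (Fin n)}
    (hf : DifferentiableAt ℝ f x) (w : EuclideanSpace ℝ (Fin n)) :
    lineDeriv ℝ f x w = ∑ i, w i * pderiv' i f x := by
  simp only [pderiv'_eq_dirDeriv, dirDeriv, hf.lineDeriv_eq_fderiv]
  conv_lhs => rw [← (EuclideanSpace.basisFun (Fin n) ℝ).sum_repr w]
  simp

end MultiDeriv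

section Multinomial

open Finset Nat

variable {n : ℕ}

theorem prod_apply_add_single {M : Type*} [CommMonoid M] (g : Fin n → ℕ → M) (β : Fin n → ℕ)
    (j : Fin n) :
    ∏ i, g i ((β + Pi.single j 1 : Fin n → ℕ) i) =
      g j (β j + 1) * ∏ i ∈ univ.erase j, g i (β i) := by
  rw [← mul_prod_erase _ _ (mem_univ j), Pi.add_apply, Pi.single_eq_same]
  congr 1
  refine prod_congr rfl fun i hi => ?_
  rw [Pi.add_apply, Pi.single_eq_of_ne (ne_of_mem_erase hi), add_zero]

theorem prod_factorial_add_single (β : Fin n → ℕ) (j : Fin n) :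
    ∏ i, (((β + Pi.single j 1 : Fin n → ℕ) i)! : ℝ) = (β j + 1) * ∏ i, ((β i)! : ℝ) := by
  rw [prod_apply_add_single (fun _ m => (m ! : ℝ)), ← mul_prod_erase _ _ (mem_univ j),
    factorial_succ]
  push_cast
  ring

theorem prod_pow_add_single (s : Fin n → ℝ) (β : Fin n → ℕ) (j : Fin n) :
    ∏ i, s i ^ ((β + Pi.single j 1 : Fin n → ℕ) i) = s j * ∏ i, s i ^ β i := by
  rw [prod_apply_add_single (fun i m => s i ^ m), ← mul_prod_erase _ _ (mem_univ j)]
  ring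

theorem add_single_mem_antidiagonalTuple {k : ℕ} {β : Fin n → ℕ} (j : Fin n) :
    β + Pi.single j 1 ∈ Nat.antidiagonalTuple n (k + 1) ↔ β ∈ Nat.antidiagonalTuple n k := by
  simp [Nat.mem_antidiagonalTuple, sum_add_distrib]

theorem sum_antidiagonalTuple_add_single (k : ℕ) (j : Fin n) (T : (Fin n → ℕ) → ℝ) :
    ∑ β ∈ Nat.antidiagonalTuple n k, ((k ! : ℝ) / ∏ i, ((β i)! : ℝ)) * T (β + Pi.single j 1) =
      ∑ γ ∈ Nat.antidiagonalTuple n (k + 1), (γ j * (k ! : ℝ) / ∏ i, ((γ i)! : ℝ)) * T γ := by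
  have hcoeff : ∀ β : Fin n → ℕ, (k ! : ℝ) / ∏ i, ((β i)! : ℝ) =
      ((β + Pi.single j 1 : Fin n → ℕ) j * (k ! : ℝ)) /
        ∏ i, (((β + Pi.single j 1 : Fin n → ℕ) i)! : ℝ) := by
    intro β
    have : ∏ i, ((β i)! : ℝ) ≠ 0 := prod_ne_zero_iff.2 fun i _ => by positivity
    rw [prod_factorial_add_single, Pi.add_apply, Pi.single_eq_same]
    push_cast
    field_simp
  refine sum_bij_ne_zero (fun β _ _ => β + Pi.single j 1)
    (fun β hβ _ => (add_single_mem_antidiagonalTuple j).2 hβ)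
    (fun β₁ _ _ β₂ _ _ h => add_right_cancel h) (fun γ hγ hne => ?_)
    (fun β _ _ => by rw [hcoeff])
  have hγj : γ j ≠ 0 := by rintro h; simp [h] at hne
  have hγ' : γ - Pi.single j 1 + Pi.single j 1 = γ := by
    ext i
    rcases eq_or_ne i j with rfl | hij
    · simp only [Pi.add_apply, Pi.sub_apply, Pi.single_eq_same]; omega
    · simp [Pi.single_eq_of_ne hij]
  refine ⟨γ - Pi.single j 1, (add_single_mem_antidiagonalTuple j).1 (hγ'.symm ▸ hγ), ?_, hγ'⟩
  rwa [hcoeff, hγ']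

theorem sum_antidiagonalTuple_succ (k : ℕ) (T : (Fin n → ℕ) → ℝ) :
    ∑ β ∈ Nat.antidiagonalTuple n k, ∑ j, ((k ! : ℝ) / ∏ i, ((β i)! : ℝ)) * T (β + Pi.single j 1) =
      ∑ γ ∈ Nat.antidiagonalTuple n (k + 1), (((k + 1)! : ℝ) / ∏ i, ((γ i)! : ℝ)) * T γ := by
  rw [sum_comm]
  simp only [sum_antidiagonalTuple_add_single]
  rw [sum_comm]
  refine sum_congr rfl fun γ hγ => ?_
  have hsum : ∑ j, (γ j : ℝ) = k + 1 := by
    rw [← Nat.cast_sum, (Nat.mem_antidiagonalTuple.1 hγ)]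
    push_cast
    ring
  simp only [mul_div_assoc, mul_assoc, ← sum_mul, hsum, factorial_succ]
  push_cast
  ring

end Multinomial

section DilatedIntegral

open Finset Nat

variable {n : ℕ} {μ : Measure (EuclideanSpace ℝ (Fin n))} [IsFiniteMeasure μ]
  {K : Set (EuclideanSpace ℝ (Fin n))} {c f : EuclideanSpace ℝ (Fin n) → ℝ}

theorem hasDerivAt_integral_mul_comp_sub_smul (hK : IsCompact K) (hμK : ∀ᵐ s ∂μ, s ∈ K)
    (hc : Continuous c) (hf : ContDiff ℝ ∞ f) (x : EuclideanSpace ℝ (Fin n)) (ε : ℝ) :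
    HasDerivAt (fun ε => ∫ s, c s * f (x - ε • s) ∂μ)
      (-∑ j, ∫ s, (c s * s j) * pderiv' j f (x - ε • s) ∂μ) ε := by
  have hfdiff := hf.differentiable (by simp)
  have hfd := hf.continuous_fderiv (by simp)
  have hpd : ∀ j, Continuous (pderiv' j f) := fun j => (hf.contDiff_dirDeriv _).continuous
  have hline : ∀ s (t : ℝ), HasDerivAt (fun t : ℝ => x - t • s) (-s) t := fun s t => by
    simpa using ((hasDerivAt_id t).smul_const s).const_sub x
  convert hasDerivAt_integral_of_continuous_of_ae_mem_compact
    (F := fun s t => c s * f (x - t • s)) (F' := fun s t => c s * fderiv ℝ f (x - t • s) (-s))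
    (by fun_prop) (by fun_prop)
    (fun s t => ((hfdiff _).hasFDerivAt.comp_hasDerivAt t (hline s t)).const_mul (c s))
    hK hμK ε using 1
  have hexpand : ∀ s, c s * fderiv ℝ f (x - ε • s) (-s) =
      -∑ j, (c s * s j) * pderiv' j f (x - ε • s) := fun s => by
    rw [map_neg, ← (hfdiff _).lineDeriv_eq_fderiv, (hfdiff _).lineDeriv_eq_sum_pderiv', mul_neg,
      mul_sum]
    simp only [mul_assoc]
  simp only [hexpand, integral_neg]
  rw [integral_finsetSum _ fun j _ =>
    Continuous.integrable_of_ae_mem_compact (by fun_prop) hK hμK]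

theorem hasLineDerivAt_integral_mul_comp_sub_smul (hK : IsCompact K) (hμK : ∀ᵐ s ∂μ, s ∈ K)
    (hc : Continuous c) (hf : ContDiff ℝ ∞ f) (ε : ℝ) (x v : EuclideanSpace ℝ (Fin n)) :
    HasLineDerivAt ℝ (fun x => ∫ s, c s * f (x - ε • s) ∂μ)
      (∫ s, c s * dirDeriv v f (x - ε • s) ∂μ) x v := by
  have hfdiff := hf.differentiable (by simp)
  have hfd := hf.continuous_fderiv (by simp)
  have hline : ∀ s (t : ℝ), HasDerivAt (fun t : ℝ => x + t • v - ε • s) v t := fun s t => by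
    simpa using (((hasDerivAt_id t).smul_const v).const_add x).sub_const (ε • s)
  have h := hasDerivAt_integral_of_continuous_of_ae_mem_compact
    (F := fun s t => c s * f (x + t • v - ε • s))
    (F' := fun s t => c s * fderiv ℝ f (x + t • v - ε • s) v) (by fun_prop) (by fun_prop)
    (fun s t => ((hfdiff _).hasFDerivAt.comp_hasDerivAt t (hline s t)).const_mul (c s)) hK hμK 0
  rw [HasLineDerivAt, hfdiff.dirDeriv_eq]
  simpa using h

theorem contDiff_integral_mul_comp_sub_smul (hK : IsCompact K) (hμK : ∀ᵐ s ∂μ, s ∈ K)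
    (hc : Continuous c) (hf : ContDiff ℝ ∞ f) (x : EuclideanSpace ℝ (Fin n)) :
    ContDiff ℝ ∞ (fun ε : ℝ => ∫ s, c s * f (x - ε • s) ∂μ) := by
  refine contDiff_infty.2 fun m => ?_
  induction m generalizing c f with
  | zero =>
    exact contDiff_zero.2 <| continuous_iff_continuousAt.2 fun ε =>
      (hasDerivAt_integral_mul_comp_sub_smul hK hμK hc hf x ε).continuousAt
  | succ m ih =>
    refine (contDiff_succ_iff_deriv (n := m)).2 ⟨fun ε =>
      (hasDerivAt_integral_mul_comp_sub_smul hK hμK hc hf x ε).differentiableAt, by simp, ?_⟩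
    rw [funext fun ε => (hasDerivAt_integral_mul_comp_sub_smul hK hμK hc hf x ε).deriv]
    exact (ContDiff.sum fun j _ => ih (by fun_prop) (hf.contDiff_dirDeriv _)).neg

theorem iteratedDeriv_integral_mul_comp_sub_smul (hK : IsCompact K) (hμK : ∀ᵐ s ∂μ, s ∈ K)
    (hc : Continuous c) (hf : ContDiff ℝ ∞ f) (x : EuclideanSpace ℝ (Fin n)) (k : ℕ) :
    iteratedDeriv k (fun ε : ℝ => ∫ s, c s * f (x - ε • s) ∂μ) = fun ε => (-1) ^ k *
      ∑ β ∈ Nat.antidiagonalTuple n k, ((k ! : ℝ) / ∏ i, ((β i)! : ℝ)) *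
        ∫ s, (c s * ∏ i, s i ^ β i) * multiDeriv β f (x - ε • s) ∂μ := by
  induction k with
  | zero => ext ε; simp [multiDeriv, Nat.antidiagonalTuple_zero_right]
  | succ k ih =>
    ext ε
    rw [iteratedDeriv_succ, ih]
    have hterm : ∀ β : Fin n → ℕ, HasDerivAt
        (fun ε : ℝ => ∫ s, (c s * ∏ i, s i ^ β i) * multiDeriv β f (x - ε • s) ∂μ)
        (-∑ j, ∫ s, (c s * ∏ i, s i ^ (β + Pi.single j 1 : Fin n → ℕ) i) *
          multiDeriv (β + Pi.single j 1) f (x - ε • s) ∂μ) ε := fun β => by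
      convert hasDerivAt_integral_mul_comp_sub_smul (c := fun s => c s * ∏ i, s i ^ β i) hK hμK
        (by fun_prop)
        (hf.contDiff_multiDeriv β) x ε using 5 with j s
      rw [hf.pderiv'_multiDeriv, prod_pow_add_single]
      ring
    refine (((HasDerivAt.fun_sum fun β _ => (hterm β).const_mul _)).const_mul _).deriv.trans ?_
    rw [← sum_antidiagonalTuple_succ, pow_succ, mul_neg_one, neg_mul]
    simp only [mul_neg, sum_neg_distrib, mul_sum]

end DilatedIntegral

theorem Set.EqOn.eqOn_gradient {F : Type*} [NormedAddCommGroup F] [InnerProductSpace ℝ F]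
    [CompleteSpace F] {f g : F → ℝ} {W : Set F} (h : EqOn f g W) (hW : IsOpen W) :
    EqOn (gradient f) (gradient g) W := fun _ hx => by
  simp only [gradient, (h.eventuallyEq_of_mem (hW.mem_nhds hx)).fderiv_eq]

theorem EuclideanSpace.integral_apply {α ι : Type*} [Fintype ι] [MeasurableSpace α]
    {μ : Measure α} {F : α → EuclideanSpace ℝ ι} (hF : Integrable F μ) (i : ι) :
    (∫ s, F s ∂μ) i = ∫ s, F s i ∂μ :=
  ((EuclideanSpace.proj i).integral_comp_comm hF).symm

section InnerGradientKernel

open Finset Nat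

variable {n : ℕ} {μ : Measure (EuclideanSpace ℝ (Fin n))} [IsFiniteMeasure μ]
  {K : Set (EuclideanSpace ℝ (Fin n))} {g : EuclideanSpace ℝ (Fin n) → ℝ}
  {ν : EuclideanSpace ℝ (Fin n) → EuclideanSpace ℝ (Fin n)} {θ : EuclideanSpace ℝ (Fin n) → ℝ}

theorem lineDeriv_integral_inner_gradient_eq_sum (hK : IsCompact K) (hμK : ∀ᵐ s ∂μ, s ∈ K)
    (hν : Continuous ν) (hθ : Continuous θ) (hg : ContDiff ℝ ∞ g)
    (x₀ v : EuclideanSpace ℝ (Fin n)) (ε : ℝ) :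
    lineDeriv ℝ (fun x => ∫ s, ⟪ν s, gradient g (x - ε • s)⟫ * θ s ∂μ) x₀ v =
      ∑ i, ∫ s, (θ s * ν s i) * pderiv' i (dirDeriv v g) (x₀ - ε • s) ∂μ := by
  have hpd : ∀ i, ContDiff ℝ ∞ (pderiv' i g) := fun i => hg.contDiff_dirDeriv _
  have hsplit : (fun x => ∫ s, ⟪ν s, gradient g (x - ε • s)⟫ * θ s ∂μ) =
      fun x => ∑ i, ∫ s, (θ s * ν s i) * pderiv' i g (x - ε • s) ∂μ := by
    ext x
    rw [← integral_finsetSum _ fun i _ => Continuous.integrable_of_ae_mem_compact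
      (by have := (hpd i).continuous; fun_prop) hK hμK]
    congr 1 with s
    rw [inner_gradient_right, starRingEnd_apply, star_trivial,
      ← (hg.differentiable (by simp) _).lineDeriv_eq_fderiv,
      (hg.differentiable (by simp) _).lineDeriv_eq_sum_pderiv', sum_mul]
    exact sum_congr rfl fun i _ => by ring
  have hline : HasLineDerivAt ℝ (fun x => ∑ i, ∫ s, (θ s * ν s i) * pderiv' i g (x - ε • s) ∂μ)
      (∑ i, ∫ s, (θ s * ν s i) * dirDeriv v (pderiv' i g) (x₀ - ε • s) ∂μ) x₀ v :=
    HasDerivAt.fun_sum fun i _ =>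
      hasLineDerivAt_integral_mul_comp_sub_smul hK hμK (by fun_prop) (hpd i) ε x₀ v
  rw [hsplit, hline.lineDeriv]
  simp only [pderiv'_eq_dirDeriv, hg.dirDeriv_comm]

theorem lineDeriv_inner_gradient_multiDeriv (hg : ContDiff ℝ ∞ g) (β : Fin n → ℕ)
    (C x₀ v : EuclideanSpace ℝ (Fin n)) :
    lineDeriv ℝ (fun x => ⟪gradient (multiDeriv β g) x, C⟫) x₀ v =
      ∑ i, C i * multiDeriv β (pderiv' i (dirDeriv v g)) x₀ := by
  have hφ := hg.contDiff_multiDeriv β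
  have hinner : (fun x => ⟪gradient (multiDeriv β g) x, C⟫) = dirDeriv C (multiDeriv β g) := by
    ext x
    rw [inner_gradient_left, dirDeriv, (hφ.differentiable (by simp) x).lineDeriv_eq_fderiv]
  rw [hinner]
  change dirDeriv v (dirDeriv C (multiDeriv β g)) x₀ = _
  rw [hφ.dirDeriv_comm, dirDeriv,
    ((hφ.contDiff_dirDeriv v).differentiable (by simp) x₀).lineDeriv_eq_sum_pderiv']
  simp only [pderiv'_eq_dirDeriv, hg.dirDeriv_multiDeriv,
    (hg.contDiff_dirDeriv v).dirDeriv_multiDeriv]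

theorem iteratedDeriv_neg_lineDeriv_integral_inner_gradient (hK : IsCompact K)
    (hμK : ∀ᵐ s ∂μ, s ∈ K) (hν : Continuous ν) (hθ : Continuous θ) (hg : ContDiff ℝ ∞ g)
    (x₀ v : EuclideanSpace ℝ (Fin n)) (k : ℕ) :
    iteratedDeriv k (fun ε : ℝ =>
        -lineDeriv ℝ (fun x => ∫ s, ⟪ν s, gradient g (x - ε • s)⟫ * θ s ∂μ) x₀ v) 0 =
      (-1 : ℝ) ^ (k + 1) * ∑ β ∈ Nat.antidiagonalTuple n k,
        ((k ! : ℝ) / ∏ i, ((β i)! : ℝ)) *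
          lineDeriv ℝ (fun x => ⟪gradient (multiDeriv β g) x,
            ∫ s, ((∏ i, s i ^ β i) * θ s) • ν s ∂μ⟫) x₀ v := by
  have hh : ∀ i, ContDiff ℝ ∞ (pderiv' i (dirDeriv v g)) :=
    fun i => (hg.contDiff_dirDeriv v).contDiff_dirDeriv _
  have hc : ∀ i, Continuous fun s => θ s * ν s i := fun i => by fun_prop
  have hcoord : ∀ (β : Fin n → ℕ) i, (∫ s, ((∏ j, s j ^ β j) * θ s) • ν s ∂μ) i =
      ∫ s, (θ s * ν s i) * ∏ j, s j ^ β j ∂μ := fun β i => by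
    rw [EuclideanSpace.integral_apply
      (Continuous.integrable_of_ae_mem_compact (by fun_prop) hK hμK)]
    congr 1 with s
    simp only [PiLp.smul_apply, smul_eq_mul]
    ring
  simp only [lineDeriv_integral_inner_gradient_eq_sum hK hμK hν hθ hg, iteratedDeriv_fun_neg]
  rw [iteratedDeriv_fun_sum fun i _ =>
    (contDiff_infty.1 (contDiff_integral_mul_comp_sub_smul hK hμK (hc i) (hh i) x₀) k).contDiffAt]
  simp only [iteratedDeriv_integral_mul_comp_sub_smul hK hμK (hc _) (hh _) x₀]
  simp only [zero_smul, sub_zero, integral_mul_const, lineDeriv_inner_gradient_multiDeriv hg,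
    hcoord]
  rw [← mul_sum, sum_comm, pow_succ, mul_neg_one, neg_mul]
  congr 2
  exact sum_congr rfl fun β _ => (mul_sum _ _ _).symm

end InnerGradientKernel

section Localization

variable {n : ℕ} {μ : Measure (EuclideanSpace ℝ (Fin n))} {K W : Set (EuclideanSpace ℝ (Fin n))}
  {g₁ g₂ : EuclideanSpace ℝ (Fin n) → ℝ} {x₀ : EuclideanSpace ℝ (Fin n)}

theorem eventuallyEq_neg_lineDeriv_integral_inner_gradient (hW : IsOpen W) (hg : EqOn g₁ g₂ W)
    (hK : IsCompact K) (hμK : ∀ᵐ s ∂μ, s ∈ K) (hx₀ : x₀ ∈ W)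
    (ν : EuclideanSpace ℝ (Fin n) → EuclideanSpace ℝ (Fin n)) (θ : EuclideanSpace ℝ (Fin n) → ℝ)
    (v : EuclideanSpace ℝ (Fin n)) :
    (fun ε : ℝ => -lineDeriv ℝ (fun x => ∫ s, ⟪ν s, gradient g₁ (x - ε • s)⟫ * θ s ∂μ) x₀ v) =ᶠ[𝓝 0]
      fun ε => -lineDeriv ℝ (fun x => ∫ s, ⟪ν s, gradient g₂ (x - ε • s)⟫ * θ s ∂μ) x₀ v := by
  have hnear : ∀ᶠ p : ℝ × EuclideanSpace ℝ (Fin n) in 𝓝 (0, x₀), ∀ s ∈ K, p.2 - p.1 • s ∈ W :=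
    hK.eventually_forall_of_forall_eventually fun s _ =>
      (show Continuous fun z : (ℝ × EuclideanSpace ℝ (Fin n)) × EuclideanSpace ℝ (Fin n) =>
        z.1.2 - z.1.1 • z.2 by fun_prop).continuousAt.preimage_mem_nhds
        (hW.mem_nhds (by simpa using hx₀))
  rw [nhds_prod_eq] at hnear
  filter_upwards [hnear.curry] with ε hε
  congr 1
  refine EventuallyEq.lineDeriv_eq ?_
  filter_upwards [hε] with x hx
  refine integral_congr_ae ?_
  filter_upwards [hμK] with s hs
  rw [hg.eqOn_gradient hW (hx s hs)]

theorem lineDeriv_inner_gradient_multiDeriv_congr (hW : IsOpen W) (hg : EqOn g₁ g₂ W)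
    (hx₀ : x₀ ∈ W) (β : Fin n → ℕ) (C v : EuclideanSpace ℝ (Fin n)) :
    lineDeriv ℝ (fun x => ⟪gradient (multiDeriv β g₁) x, C⟫) x₀ v =
      lineDeriv ℝ (fun x => ⟪gradient (multiDeriv β g₂) x, C⟫) x₀ v := by
  refine EventuallyEq.lineDeriv_eq ?_
  filter_upwards [hW.mem_nhds hx₀] with x hx
  rw [(hg.eqOn_multiDeriv hW β).eqOn_gradient hW hx]

end Localization

theorem exists_contDiff_eqOn_of_contDiffOn_compl_zero {E : Type*} [NormedAddCommGroup E]
    [NormedSpace ℝ E] [HasContDiffBump E] {f : E → ℝ} (hf : ContDiffOn ℝ ∞ f {0}ᶜ) {r : ℝ}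
    (hr : 0 < r) : ∃ g : E → ℝ, ContDiff ℝ ∞ g ∧ EqOn g f {x | r ≤ ‖x‖} := by
  let φ : ContDiffBump (0 : E) := ⟨r / 2, r, half_pos hr, half_lt_self hr⟩
  refine ⟨fun x => (1 - φ x) * f x, contDiff_iff_contDiffAt.2 fun x => ?_, fun x hx => ?_⟩
  · rcases eq_or_ne x 0 with rfl | hx
    · refine contDiffAt_const (c := (0 : ℝ)).congr_of_eventuallyEq ?_
      filter_upwards [Metric.ball_mem_nhds (0 : E) φ.rIn_pos] with y hy
      rw [φ.one_of_mem_closedBall (Metric.ball_subset_closedBall hy), sub_self, zero_mul]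
    · exact (contDiffAt_const.sub φ.contDiff.contDiffAt).mul
        (hf.contDiffAt (isOpen_compl_singleton.mem_nhds hx))
  · simp [φ.zero_of_le_dist (by simpa using hx)]

theorem fundSol_contDiffOn (n : ℕ) :
    ContDiffOn ℝ ∞ (fundSol n) {0}ᶜ := fun x hx => by
  have hx' : ‖x‖ ≠ 0 := norm_ne_zero_iff.2 hx
  refine ContDiffAt.contDiffWithinAt ?_
  unfold fundSol
  split_ifs
  · exact contDiffAt_const.mul ((contDiffAt_norm ℝ hx).log hx')
  · exact contDiffAt_const.mul ((contDiffAt_norm ℝ hx).rpow_const_of_ne hx')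

theorem stmt13_general (n : ℕ) (Ωi : Set (EuclideanSpace ℝ (Fin n)))
    (hb : Bornology.IsBounded Ωi)
    (hfin : IsFiniteMeasure (bdryMeasure n (frontier Ωi)))
    (ν : EuclideanSpace ℝ (Fin n) → EuclideanSpace ℝ (Fin n)) (hν : Continuous ν)
    (θ : EuclideanSpace ℝ (Fin n) → ℝ) (hθ : Continuous θ)
    (v : EuclideanSpace ℝ (Fin n))
    (x₀ : EuclideanSpace ℝ (Fin n)) (hx₀ : x₀ ≠ 0) (k : ℕ) :
    iteratedDeriv k
        (fun ε : ℝ =>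
          -lineDeriv ℝ
            (fun x => ∫ s, ⟪ν s, gradient (fundSol n) (x - ε • s)⟫ * θ s
              ∂(bdryMeasure n (frontier Ωi))) x₀ v) 0 =
      (-1 : ℝ) ^ (k + 1) * ∑ β ∈ Finset.Nat.antidiagonalTuple n k,
        ((k.factorial : ℝ) / ∏ i, ((β i).factorial : ℝ)) *
          lineDeriv ℝ
            (fun x => ⟪gradient (multiDeriv β (fundSol n)) x,
              ∫ s, ((∏ i, s i ^ β i) * θ s) • ν s ∂(bdryMeasure n (frontier Ωi))⟫) x₀ v := by
  have hK : IsCompact (frontier Ωi) :=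
    hb.isCompact_closure.of_isClosed_subset isClosed_frontier frontier_subset_closure
  have hμK : ∀ᵐ s ∂(bdryMeasure n (frontier Ωi)), s ∈ frontier Ωi :=
    ae_restrict_mem isClosed_frontier.measurableSet
  have hx₀pos : 0 < ‖x₀‖ := norm_pos_iff.2 hx₀
  obtain ⟨g, hg, hgG⟩ :=
    exists_contDiff_eqOn_of_contDiffOn_compl_zero (fundSol_contDiffOn n) (half_pos hx₀pos)
  set W : Set (EuclideanSpace ℝ (Fin n)) := {x | ‖x₀‖ / 2 < ‖x‖}
  have hW : IsOpen W := isOpen_lt continuous_const continuous_norm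
  have hgW : EqOn g (fundSol n) W := fun x (hx : ‖x₀‖ / 2 < ‖x‖) => hgG hx.le
  have hx₀W : x₀ ∈ W := half_lt_self hx₀pos
  rw [← ((eventuallyEq_neg_lineDeriv_integral_inner_gradient hW hgW hK hμK hx₀W ν θ v).iteratedDeriv
    k).eq_of_nhds, iteratedDeriv_neg_lineDeriv_integral_inner_gradient hK hμK hν hθ hg]
  simp only [lineDeriv_inner_gradient_multiDeriv_congr hW hgW hx₀W]

/-- Let `F(ε) = -v · ∇_x [x ↦ ∫_{∂Ωⁱ} ν(s) · ∇G_n(x - ε•s) θ(s) dσ(s)](x₀)`. Then the `k`-th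
derivative of `F` at `ε = 0` equals
`(-1)^(k+1) ∑_{|β|=k} (k!/β!) v · ∇_x [x ↦ (∇D^β G_n)(x) · c_β](x₀)`, where
`c_β = ∫_{∂Ωⁱ} ν(s) s^β θ(s) dσ(s)`. -/
theorem stmt13 (n : ℕ) (hn : 2 ≤ n) (Ωi : Set (EuclideanSpace ℝ (Fin n)))
    (hΩ : IsOpen Ωi) (hb : Bornology.IsBounded Ωi)
    (hfin : IsFiniteMeasure (bdryMeasure n (frontier Ωi)))
    (ν : EuclideanSpace ℝ (Fin n) → EuclideanSpace ℝ (Fin n)) (hν : Continuous ν)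
    (θ : EuclideanSpace ℝ (Fin n) → ℝ) (hθ : Continuous θ)
    (v : EuclideanSpace ℝ (Fin n))
    (x₀ : EuclideanSpace ℝ (Fin n)) (hx₀ : x₀ ≠ 0) (k : ℕ) :
    iteratedDeriv k
        (fun ε : ℝ =>
          -lineDeriv ℝ
            (fun x => ∫ s, ⟪ν s, gradient (fundSol n) (x - ε • s)⟫ * θ s
              ∂(bdryMeasure n (frontier Ωi))) x₀ v) 0 =
      (-1 : ℝ) ^ (k + 1) * ∑ β ∈ Finset.Nat.antidiagonalTuple n k,
        ((k.factorial : ℝ) / ∏ i, ((β i).factorial : ℝ)) *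
          lineDeriv ℝ
            (fun x => ⟪gradient (multiDeriv β (fundSol n)) x,
              ∫ s, ((∏ i, s i ^ β i) * θ s) • ν s ∂(bdryMeasure n (frontier Ωi))⟫) x₀ v :=
  stmt13_general n Ωi hb hfin ν hν θ hθ v x₀ hx₀ k
end

section
/- Let X, Y, Z be real Banach spaces, let U ⊆ X be open, and let T : U → L(Y, Z) be a map into the Banach space of bounded linear operators from Y to Z equipped with the operator norm. If the evaluation map U × Y → Z, (φ, y) ↦ T(φ)(y), is real analytic on U × Y, then T is real analytic on U. -/
/-- If `X, Y, Z` are real Banach spaces, `U ⊆ X` is open, and `T : U → L(Y, Z)` is such that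
the evaluation map `(φ, y) ↦ T(φ)(y)` is real analytic on `U × Y`, then `T` is real analytic
on `U` as a map with values in the Banach space of bounded linear operators. -/
theorem stmt15 (X Y Z : Type*)
    [NormedAddCommGroup X] [NormedSpace ℝ X] [CompleteSpace X]
    [NormedAddCommGroup Y] [NormedSpace ℝ Y] [CompleteSpace Y]
    [NormedAddCommGroup Z] [NormedSpace ℝ Z] [CompleteSpace Z]
    (U : Set X) (hU : IsOpen U) (T : X → Y →L[ℝ] Z)
    (h : AnalyticOnNhd ℝ (fun p : X × Y => T p.1 p.2) (U ×ˢ (Set.univ : Set Y))) :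
    AnalyticOnNhd ℝ T U := by
  set f : X × Y → Z := fun p => T p.1 p.2 with hf
  have hD : AnalyticOnNhd ℝ (fderiv ℝ f) (U ×ˢ (Set.univ : Set Y)) := h.fderiv
  -- candidate analytic map
  have hA : AnalyticOnNhd ℝ
      (fun x => ((ContinuousLinearMap.compL ℝ Y (X × Y) Z).flip
        (ContinuousLinearMap.inr ℝ X Y)) (fderiv ℝ f (x, (0 : Y)))) U := by
    intro x hx
    have h1 : AnalyticAt ℝ (fun x : X => (x, (0 : Y))) x :=
      ((ContinuousLinearMap.inl ℝ X Y).analyticAt x)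
    have h2 : AnalyticAt ℝ (fderiv ℝ f) (x, (0 : Y)) := hD _ ⟨hx, trivial⟩
    have h3 : AnalyticAt ℝ ((fderiv ℝ f) ∘ (fun x : X => (x, (0 : Y)))) x :=
      AnalyticAt.comp (f := fun x : X => (x, (0 : Y))) h2 h1
    exact AnalyticAt.comp (f := (fderiv ℝ f) ∘ (fun x : X => (x, (0 : Y))))
      (((ContinuousLinearMap.compL ℝ Y (X × Y) Z).flip
        (ContinuousLinearMap.inr ℝ X Y)).analyticAt _) h3
  intro x hx
  refine (hA x hx).congr ?_
  have : ∀ᶠ x' in nhds x, x' ∈ U := hU.mem_nhds hx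
  filter_upwards [this] with x' hx'
  -- show the candidate equals T x'
  have hdiff : HasFDerivAt f (fderiv ℝ f (x', (0 : Y))) (x', (0 : Y)) :=
    ((h _ ⟨hx', trivial⟩).differentiableAt).hasFDerivAt
  have hinr : HasFDerivAt (fun y : Y => (x', y)) (ContinuousLinearMap.inr ℝ X Y) (0 : Y) :=
    hasFDerivAt_prodMk_right x' 0
  have hcomp : HasFDerivAt (fun y : Y => f (x', y))
      ((fderiv ℝ f (x', (0 : Y))).comp (ContinuousLinearMap.inr ℝ X Y)) (0 : Y) :=
    hdiff.comp 0 hinr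
  have hT : HasFDerivAt (fun y : Y => f (x', y)) (T x') (0 : Y) := (T x').hasFDerivAt
  have := hT.unique hcomp
  simp only [ContinuousLinearMap.flip_apply, ContinuousLinearMap.compL_apply]
  exact this.symm
end

section
/- Let X be a real normed vector space. For all x, y ∈ X, the supremum over all continuous linear functionals Φ : X → ℝ with ‖Φ‖ ≤ 1 of √(Φ(x)² + Φ(y)²) equals the supremum over t ∈ [0, 2π] of ‖(cos t)·x + (sin t)·y‖. -/
/-!
Write `v t = cos t • x + sin t • y`. For a functional `Φ`, `Φ (v t) = Φ x cos t + Φ y sin t`,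
and as `t` varies the maximum of `a cos t + b sin t` is `√(a² + b²)`. So a norming functional
of `v t` (Hahn–Banach) bounds `‖v t‖` by the left-hand side, while evaluating `Φ` at `v t` for
`t` the polar angle of `(Φ x, Φ y)` bounds `√(Φ(x)² + Φ(y)²)` by `‖v t‖`. Each family is
dominated by the other, so the suprema agree; periodicity lets `t` range over all of `ℝ`.
-/

open Real

lemma mul_cos_add_mul_sin_le_sqrt (a b t : ℝ) : a * cos t + b * sin t ≤ √(a ^ 2 + b ^ 2) := by
  refine le_sqrt_of_sq_le ?_
  have h := cos_sq_add_sin_sq t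
  nlinarith [sq_nonneg (a * sin t - b * cos t)]

lemma exists_mul_cos_add_mul_sin_eq_sqrt (a b : ℝ) :
    ∃ t, a * cos t + b * sin t = √(a ^ 2 + b ^ 2) := by
  set z : ℂ := a + b * Complex.I
  have ha : ‖z‖ * cos z.arg = a := by simp [z, Complex.norm_mul_cos_arg]
  have hb : ‖z‖ * sin z.arg = b := by simp [z, Complex.norm_mul_sin_arg]
  refine ⟨z.arg, ?_⟩
  rw [← Complex.norm_add_mul_I]
  linear_combination (-cos z.arg) * ha - sin z.arg * hb + ‖z‖ * cos_sq_add_sin_sq z.arg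

section

variable {X : Type*} [NormedAddCommGroup X] [NormedSpace ℝ X]

lemma periodic_norm_cos_smul_add_sin_smul (x y : X) :
    Function.Periodic (fun t : ℝ => ‖cos t • x + sin t • y‖) (2 * π) := by
  intro t
  simp only [cos_add_two_pi, sin_add_two_pi]

lemma ContinuousLinearMap.map_cos_smul_add_sin_smul (Φ : X →L[ℝ] ℝ) (x y : X) (t : ℝ) :
    Φ (cos t • x + sin t • y) = Φ x * cos t + Φ y * sin t := by
  simp only [map_add, map_smul, smul_eq_mul]
  ring

end

/-- For a real normed space `X` and `x, y ∈ X`, the supremum over functionals `Φ` in the closed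
unit ball of the dual of `√(Φ(x)² + Φ(y)²)` equals the supremum over `t ∈ [0, 2π]` of
`‖(cos t)·x + (sin t)·y‖`. -/
theorem stmt16 (X : Type*) [NormedAddCommGroup X] [NormedSpace ℝ X] (x y : X) :
    sSup ((fun Φ : X →L[ℝ] ℝ => Real.sqrt (Φ x ^ 2 + Φ y ^ 2)) '' {Φ | ‖Φ‖ ≤ 1}) =
      sSup ((fun t : ℝ => ‖Real.cos t • x + Real.sin t • y‖) '' Set.Icc 0 (2 * Real.pi)) := by
  rw [← zero_add (2 * π), (periodic_norm_cos_smul_add_sin_smul x y).image_Icc two_pi_pos 0]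
  refine csSup_eq_csSup_of_forall_exists_le ?_ ?_
  · rintro _ ⟨Φ, hΦ, rfl⟩
    obtain ⟨t, ht⟩ := exists_mul_cos_add_mul_sin_eq_sqrt (Φ x) (Φ y)
    refine ⟨_, ⟨t, rfl⟩, ?_⟩
    calc √(Φ x ^ 2 + Φ y ^ 2) = Φ (cos t • x + sin t • y) := by
          rw [Φ.map_cos_smul_add_sin_smul, ht]
      _ ≤ ‖cos t • x + sin t • y‖ := by
          simpa using (le_abs_self _).trans (Φ.le_of_opNorm_le hΦ (cos t • x + sin t • y))
  · rintro _ ⟨t, rfl⟩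
    obtain ⟨Φ, hΦ, hv⟩ := exists_dual_vector'' ℝ (cos t • x + sin t • y)
    refine ⟨_, ⟨Φ, hΦ, rfl⟩, ?_⟩
    calc ‖cos t • x + sin t • y‖ = Φ x * cos t + Φ y * sin t := by
          rw [← Φ.map_cos_smul_add_sin_smul, hv, RCLike.ofReal_real_eq_id, id]
      _ ≤ √(Φ x ^ 2 + Φ y ^ 2) := mul_cos_add_mul_sin_le_sqrt _ _ _
end

section
/- Let X be a real normed vector space and suppose that for all a, b ∈ ℝ and all x, y ∈ X one has √(‖a·x − b·y‖² + ‖b·x + a·y‖²) = √(a² + b²) · √(‖x‖² + ‖y‖²) (i.e., the function n(x + iy) = √(‖x‖² + ‖y‖²) on the complexification X + iX, with complex scalar action (a + ib)(x + iy) = (ax − by) + i(bx + ay), is positively homogeneous). Then the norm of X satisfies the parallelogram law: for all x, y ∈ X, ‖x + y‖² + ‖x − y‖² = 2‖x‖² + 2‖y‖². -/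
/-- If the function `n(x + iy) = √(‖x‖² + ‖y‖²)` on the complexification `X + iX` is positively
homogeneous with respect to the complex scalar action `(a + ib)(x + iy) = (ax - by) + i(bx + ay)`,
then the norm of `X` satisfies the parallelogram law. -/
theorem stmt17 (X : Type*) [NormedAddCommGroup X] [NormedSpace ℝ X]
    (h : ∀ (a b : ℝ) (x y : X),
      Real.sqrt (‖a • x - b • y‖ ^ 2 + ‖b • x + a • y‖ ^ 2) =
        Real.sqrt (a ^ 2 + b ^ 2) * Real.sqrt (‖x‖ ^ 2 + ‖y‖ ^ 2)) :
    ∀ x y : X, ‖x + y‖ ^ 2 + ‖x - y‖ ^ 2 = 2 * ‖x‖ ^ 2 + 2 * ‖y‖ ^ 2 := by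
  intro x y
  have hx := h 1 1 x y
  simp only [one_smul] at hx
  have h1 : (0:ℝ) ≤ ‖x - y‖ ^ 2 + ‖x + y‖ ^ 2 := by positivity
  have h2 : Real.sqrt (‖x - y‖ ^ 2 + ‖x + y‖ ^ 2) ^ 2 =
      (Real.sqrt ((1:ℝ) ^ 2 + 1 ^ 2) * Real.sqrt (‖x‖ ^ 2 + ‖y‖ ^ 2)) ^ 2 := by rw [hx]
  rw [Real.sq_sqrt h1, mul_pow, Real.sq_sqrt (by positivity), Real.sq_sqrt (by positivity)] at h2
  ring_nf at h2 ⊢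
  linarith
end
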